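/- Let T be a tournament on a finite vertex set, let k be a nonnegative integer, and let A' be a DESC-set of T with |A'| ≤ k. If P is a directed path in T from a vertex x to a vertex y with d⁺_T(y) − d⁺_T(x) > k, then at least one arc of P belongs to A'. -/

import Mathlib

/-!
Digraphs on a finite vertex type `V` are modelled by their arc sets
`D : Finset (V × V)`, where `(x, y) ∈ D` means there is an arc from `x` to `y`.
-/

namespace DescPaper

variable {V : Type*} [Fintype V] [DecidableEq V]

/-- The out-degree of `x` in the digraph `D`. -/
def outDeg (D : Finset (V × V)) (x : V) : ℕ :=
  (D.filter (fun a => a.1 = x)).card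

/-- The in-degree of `x` in the digraph `D`. -/
def inDeg (D : Finset (V × V)) (x : V) : ℕ :=
  (D.filter (fun a => a.2 = x)).card

/-- The number of arcs of `D` from `x` to a vertex of `Y`. -/
def outDegInto (D : Finset (V × V)) (x : V) (Y : Finset V) : ℕ :=
  (D.filter (fun a => a.1 = x ∧ a.2 ∈ Y)).card

/-- The subgraph of `D` induced by the vertex set `X`. -/
def induce (D : Finset (V × V)) (X : Finset V) : Finset (V × V) :=
  D.filter (fun a => a.1 ∈ X ∧ a.2 ∈ X)

/-- Reachability by a directed path in the digraph `D`. -/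
def Reach (D : Finset (V × V)) : V → V → Prop :=
  Relation.ReflTransGen (fun u v => (u, v) ∈ D)

/-- The subgraph of `D` induced by `X` is strongly connected. -/
def StronglyConnectedOn (D : Finset (V × V)) (X : Finset V) : Prop :=
  ∀ x ∈ X, ∀ y ∈ X, Reach (induce D X) x y

/-- `X` is the vertex set of a strong component of `D`:
a maximal (nonempty) vertex set inducing a strongly connected subgraph. -/
def IsStrongComponent (D : Finset (V × V)) (X : Finset V) : Prop :=
  X.Nonempty ∧ StronglyConnectedOn D X ∧
    ∀ Y : Finset V, X ⊆ Y → StronglyConnectedOn D Y → Y = X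

/-- The digraph `D` is balanced: every vertex has equal in- and out-degree. -/
def IsBalanced (D : Finset (V × V)) : Prop :=
  ∀ x : V, outDeg D x = inDeg D x

/-- The subgraph of `D` induced by `X` is Eulerian:
strongly connected and balanced. -/
def EulerianOn (D : Finset (V × V)) (X : Finset V) : Prop :=
  StronglyConnectedOn D X ∧ IsBalanced (induce D X)

/-- `A'` is a DESC-set of `D`: a set of arcs of `D` such that every strong
component of `D - A'` is Eulerian. -/
def IsDESC (D A' : Finset (V × V)) : Prop :=
  A' ⊆ D ∧ ∀ X : Finset V, IsStrongComponent (D \ A') X → EulerianOn (D \ A') X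

/-- `desc D` is the minimum size of a DESC-set of `D`. -/
noncomputable def desc (D : Finset (V × V)) : ℕ :=
  sInf {n | ∃ A' : Finset (V × V), IsDESC D A' ∧ A'.card = n}

/-- `T` is a tournament: no loops, and for every pair of distinct vertices
exactly one of the two possible arcs is present. -/
def IsTournament (T : Finset (V × V)) : Prop :=
  (∀ x : V, (x, x) ∉ T) ∧ ∀ x y : V, x ≠ y → ((x, y) ∈ T ↔ (y, x) ∉ T)

/-- `dstar A' X Y` is the number of arcs of `A'` with one endpoint in `X`
and the other endpoint in `Y` (in either direction). -/
def dstar (A' : Finset (V × V)) (X Y : Finset V) : ℕ :=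
  (A'.filter (fun a => (a.1 ∈ X ∧ a.2 ∈ Y) ∨ (a.1 ∈ Y ∧ a.2 ∈ X))).card

end DescPaper

open DescPaper

/-!
Suppose the path avoids `A'`, so that `x` reaches `y` in `D = T - A'`. Every out-neighbour of `y`
in `T` is reachable from `y` in `D` or joined to `y` by an arc of `A'`; every vertex that cannot
reach `x` in `D` is an out-neighbour of `x` in `T` unless it sends an arc of `A'` to `x`. If `y`
cannot reach `x`, the vertices reachable from `y` are among those that cannot reach `x`, and the
bound `d⁺(y) ≤ d⁺(x) + |A'|` follows at once. Otherwise `x` and `y` lie in one strong component `C`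
of `D`, which is Eulerian: balance at `x` and at `y` bounds the difference of their out-degrees
inside `C` by the arcs of `A'` inside `C` leaving `y` or entering `x`, which are disjoint from the
arcs of `A'` counted before.
-/

namespace DescPaper

open Finset

variable {V : Type*}

lemma Reach.refl (D : Finset (V × V)) (v : V) : Reach D v v := Relation.ReflTransGen.refl

lemma Reach.single {D : Finset (V × V)} {u v : V} (h : (u, v) ∈ D) : Reach D u v :=
  Relation.ReflTransGen.single h

lemma Reach.trans {D : Finset (V × V)} {u v w : V} (huv : Reach D u v) (hvw : Reach D v w) :
    Reach D u w :=
  Relation.ReflTransGen.trans huv hvw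

lemma Reach.mono {D D' : Finset (V × V)} (h : D ⊆ D') {u v : V} (huv : Reach D u v) :
    Reach D' u v :=
  Relation.ReflTransGen.mono (fun _ _ hab => h hab) _ _ huv

section

variable [DecidableEq V]

lemma reach_sdiff_of_isChain {D A : Finset (V × V)} {p : List V} {x y : V}
    (hp : p.IsChain fun u v => (u, v) ∈ D) (hA : ∀ a ∈ p.zip p.tail, a ∉ A)
    (hx : p.head? = some x) (hy : p.getLast? = some y) : Reach (D \ A) x y := by
  induction p generalizing x with
  | nil => simp at hx
  | cons a t ih =>
    rw [List.head?_cons, Option.some_inj] at hx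
    subst hx
    cases t with
    | nil =>
      rw [List.getLast?_singleton, Option.some_inj] at hy
      exact hy ▸ .refl _ _
    | cons b l =>
      rw [List.isChain_cons_cons] at hp
      refine Relation.ReflTransGen.head (mem_sdiff.2 ⟨hp.1, hA _ (by simp)⟩)
        (ih hp.2 (fun q hq => hA q ?_) rfl (by simpa using hy))
      simp_all

end

variable [Fintype V]

open scoped Classical in
noncomputable def strongComp (D : Finset (V × V)) (v : V) : Finset V :=
  {w | Reach D v w ∧ Reach D w v}

@[simp] lemma mem_strongComp {D : Finset (V × V)} {v w : V} :
    w ∈ strongComp D v ↔ Reach D v w ∧ Reach D w v := by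
  simp [strongComp]

lemma self_mem_strongComp (D : Finset (V × V)) (v : V) : v ∈ strongComp D v :=
  mem_strongComp.2 ⟨.refl D v, .refl D v⟩

variable [DecidableEq V]

def outNbrs (D : Finset (V × V)) (v : V) : Finset V := {w | (v, w) ∈ D}

def inNbrs (D : Finset (V × V)) (v : V) : Finset V := {w | (w, v) ∈ D}

@[simp] lemma mem_outNbrs {D : Finset (V × V)} {v w : V} : w ∈ outNbrs D v ↔ (v, w) ∈ D := by
  simp [outNbrs]

@[simp] lemma mem_inNbrs {D : Finset (V × V)} {v w : V} : w ∈ inNbrs D v ↔ (w, v) ∈ D := by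
  simp [inNbrs]

lemma outDeg_eq_card_outNbrs (D : Finset (V × V)) (v : V) : outDeg D v = #(outNbrs D v) :=
  card_nbij' Prod.snd (Prod.mk v) (by rintro ⟨_, w⟩ h; obtain ⟨h, rfl⟩ := mem_filter.1 h; simpa)
    (by intro w; simp) (by rintro ⟨_, w⟩ h; obtain ⟨-, rfl⟩ := mem_filter.1 h; rfl)
    (by intro w; simp)

lemma inDeg_eq_card_inNbrs (D : Finset (V × V)) (v : V) : inDeg D v = #(inNbrs D v) :=
  card_nbij' Prod.fst (Prod.mk · v) (by rintro ⟨u, _⟩ h; obtain ⟨h, rfl⟩ := mem_filter.1 h; simpa)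
    (by intro w; simp) (by rintro ⟨u, _⟩ h; obtain ⟨-, rfl⟩ := mem_filter.1 h; rfl)
    (by intro w; simp)

lemma outNbrs_induce {D : Finset (V × V)} {X : Finset V} {v : V} (hv : v ∈ X) :
    outNbrs (induce D X) v = outNbrs D v ∩ X := by
  ext w; simp [induce, hv]

lemma inNbrs_induce {D : Finset (V × V)} {X : Finset V} {v : V} (hv : v ∈ X) :
    inNbrs (induce D X) v = inNbrs D v ∩ X := by
  ext w; simp [induce, hv]

lemma Reach.induce_strongComp {D : Finset (V × V)} {v u w : V} (h : Reach D u w)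
    (hu : u ∈ strongComp D v) (hw : w ∈ strongComp D v) :
    Reach (induce D (strongComp D v)) u w := by
  induction h using Relation.ReflTransGen.head_induction_on with
  | refl => exact .refl _ _
  | head hab hbw ih =>
    have hb : _ ∈ strongComp D v :=
      mem_strongComp.2 ⟨(mem_strongComp.1 hu).1.trans (.single hab),
        Reach.trans hbw (mem_strongComp.1 hw).2⟩
    exact Relation.ReflTransGen.head (mem_filter.2 ⟨hab, hu, hb⟩) (ih hb)

lemma isStrongComponent_strongComp (D : Finset (V × V)) (v : V) :
    IsStrongComponent D (strongComp D v) := by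
  refine ⟨⟨v, self_mem_strongComp D v⟩, fun u hu w hw => ?_, fun Y hY hconn => ?_⟩
  · exact Reach.induce_strongComp ((mem_strongComp.1 hu).2.trans (mem_strongComp.1 hw).1) hu hw
  · have hvY := hY (self_mem_strongComp D v)
    refine Subset.antisymm (fun w hw => mem_strongComp.2 ⟨?_, ?_⟩) hY
    · exact (hconn v hvY w hw).mono (filter_subset _ _)
    · exact (hconn w hw v hvY).mono (filter_subset _ _)

lemma card_outNbrs_inter_add_card_inNbrs_inter {T : Finset (V × V)} (hT : IsTournament T)
    {C : Finset V} {v : V} (hv : v ∈ C) :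
    #(outNbrs T v ∩ C) + #(inNbrs T v ∩ C) + 1 = #C := by
  rw [← card_erase_add_one hv,
    ← card_filter_add_card_filter_not (s := C.erase v) (fun w => (v, w) ∈ T)]
  congr 3 <;> ext w <;> simp only [mem_inter, mem_outNbrs, mem_inNbrs, mem_filter, mem_erase]
  · exact ⟨fun h => ⟨⟨fun hwv => hT.1 v (hwv ▸ h.1), h.2⟩, h.1⟩, fun h => ⟨h.2, h.1.2⟩⟩
  · constructor
    · rintro ⟨h, hw⟩
      have hwv : w ≠ v := fun hwv => hT.1 v (hwv ▸ h)
      exact ⟨⟨hwv, hw⟩, (hT.2 w v hwv).1 h⟩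
    · rintro ⟨⟨hwv, hw⟩, h⟩
      exact ⟨(hT.2 w v hwv).2 h, hw⟩

lemma card_outNbrs_inter_eq_add {T A : Finset (V × V)} (hA : A ⊆ T) (v : V) (C : Finset V) :
    #(outNbrs T v ∩ C) = #(outNbrs (T \ A) v ∩ C) + #(outNbrs A v ∩ C) := by
  rw [← card_filter_add_card_filter_not (s := outNbrs T v ∩ C) (fun w => (v, w) ∉ A)]
  congr 2 <;> ext w <;> simp only [mem_inter, mem_outNbrs, mem_filter, mem_sdiff, not_not]
  · tauto
  · exact ⟨fun h => ⟨h.2, h.1.2⟩, fun h => ⟨⟨hA h.1, h.2⟩, h.1⟩⟩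

lemma card_inNbrs_inter_eq_add {T A : Finset (V × V)} (hA : A ⊆ T) (v : V) (C : Finset V) :
    #(inNbrs T v ∩ C) = #(inNbrs (T \ A) v ∩ C) + #(inNbrs A v ∩ C) := by
  rw [← card_filter_add_card_filter_not (s := inNbrs T v ∩ C) (fun w => (w, v) ∉ A)]
  congr 2 <;> ext w <;> simp only [mem_inter, mem_inNbrs, mem_filter, mem_sdiff, not_not]
  · tauto
  · exact ⟨fun h => ⟨h.2, h.1.2⟩, fun h => ⟨⟨hA h.1, h.2⟩, h.1⟩⟩

/-- Balance makes the arcs of `T - A` entering and leaving `v` inside `C` equinumerous; as `T` is a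
tournament, this fixes the number of arcs of `T` from `v` into `C` up to the arcs of `A`. -/
lemma two_mul_card_outNbrs_inter_add {T A : Finset (V × V)} (hT : IsTournament T) (hA : A ⊆ T)
    {C : Finset V} (hbal : IsBalanced (induce (T \ A) C)) {v : V} (hv : v ∈ C) :
    2 * #(outNbrs T v ∩ C) + #(inNbrs A v ∩ C) + 1 = #C + #(outNbrs A v ∩ C) := by
  have hbal_v : #(outNbrs (T \ A) v ∩ C) = #(inNbrs (T \ A) v ∩ C) := by
    simpa only [outDeg_eq_card_outNbrs, inDeg_eq_card_inNbrs, outNbrs_induce hv,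
      inNbrs_induce hv] using hbal v
  have := card_outNbrs_inter_add_card_inNbrs_inter hT hv
  rw [card_outNbrs_inter_eq_add hA] at this ⊢
  rw [card_inNbrs_inter_eq_add hA] at this
  omega

section Reachability

open scoped Classical

/-- Every out-neighbour of `v` in `T` is reachable from `v` in `T - A` unless the arc to it
lies in `A`. -/
lemma outDeg_le_card_outNbrs_inter_add (T A : Finset (V × V)) (v : V) (C : Finset V) :
    outDeg T v ≤ #(outNbrs T v ∩ C) + #(({w | Reach (T \ A) v w} : Finset V) \ C) +
      #{a ∈ A | a.1 = v ∧ ¬Reach (T \ A) v a.2} := by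
  set F := {a ∈ A | a.1 = v ∧ ¬Reach (T \ A) v a.2}
  calc outDeg T v
      ≤ #(outNbrs T v ∩ C ∪ ({w | Reach (T \ A) v w} : Finset V) \ C ∪ F.image Prod.snd) := by
        rw [outDeg_eq_card_outNbrs]
        refine card_le_card fun w hw => ?_
        rw [mem_outNbrs] at hw
        by_cases hwC : w ∈ C
        · simp [hw, hwC]
        by_cases hvw : Reach (T \ A) v w
        · simp [hvw, hwC]
        have hwA : (v, w) ∈ A := by_contra fun h => hvw (.single (mem_sdiff.2 ⟨hw, h⟩))
        exact mem_union_right _ (mem_image.2 ⟨(v, w), mem_filter.2 ⟨hwA, rfl, hvw⟩, rfl⟩)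
    _ ≤ _ := (card_union_le _ _).trans (add_le_add (card_union_le _ _) card_image_le)

/-- In a tournament, every vertex `w` that cannot reach `x` in `T - A` is an out-neighbour of
`x`, unless the arc `(w, x)` lies in `A`. -/
lemma card_outNbrs_inter_add_card_le {T : Finset (V × V)} (hT : IsTournament T)
    (A : Finset (V × V)) {x : V} {C : Finset V} (hC : ∀ w ∈ C, Reach (T \ A) w x) :
    #(outNbrs T x ∩ C) + #{w | ¬Reach (T \ A) w x} ≤
      outDeg T x + #{a ∈ A | a.2 = x ∧ ¬Reach (T \ A) a.1 x} := by
  set F := {a ∈ A | a.2 = x ∧ ¬Reach (T \ A) a.1 x}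
  set R : Finset V := {w | ¬Reach (T \ A) w x}
  have hdisj : Disjoint (outNbrs T x ∩ C) R :=
    disjoint_left.2 fun w hw hw' => (mem_filter.1 hw').2 (hC w (mem_inter.1 hw).2)
  calc #(outNbrs T x ∩ C) + #R
      = #(outNbrs T x ∩ C ∪ R) := (card_union_of_disjoint hdisj).symm
    _ ≤ #(outNbrs T x ∪ F.image Prod.fst) := by
        refine card_le_card fun w hw => ?_
        rcases mem_union.1 hw with hw | hw
        · exact mem_union_left _ (mem_inter.1 hw).1
        have hwx : ¬Reach (T \ A) w x := (mem_filter.1 hw).2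
        have hxw : x ≠ w := fun h => hwx (h ▸ .refl _ _)
        by_cases hT_xw : (x, w) ∈ T
        · exact mem_union_left _ (mem_outNbrs.2 hT_xw)
        have hwA : (w, x) ∈ A := by_contra fun h =>
          hwx (.single (mem_sdiff.2 ⟨(hT.2 w x hxw.symm).2 hT_xw, h⟩))
        exact mem_union_right _ (mem_image.2 ⟨(w, x), mem_filter.2 ⟨hwA, rfl, hwx⟩, rfl⟩)
    _ ≤ _ := by
        rw [outDeg_eq_card_outNbrs]
        exact (card_union_le _ _).trans (add_le_add le_rfl card_image_le)

lemma outDeg_le_outDeg_add_card_of_not_reach {T : Finset (V × V)} (hT : IsTournament T)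
    (A : Finset (V × V)) {x y : V} (hyx : ¬Reach (T \ A) y x) :
    outDeg T y ≤ outDeg T x + #A := by
  have hy := outDeg_le_card_outNbrs_inter_add T A y {y}
  have hx := card_outNbrs_inter_add_card_le hT A (x := x) (C := ∅) (by simp)
  set S : Finset V := {w | Reach (T \ A) y w}
  set FA := {a ∈ A | a.1 = y ∧ ¬Reach (T \ A) y a.2}
  set FB := {a ∈ A | a.2 = x ∧ ¬Reach (T \ A) a.1 x}
  have hloop : outNbrs T y ∩ {y} = ∅ := by
    ext w; simp only [mem_inter, mem_outNbrs, mem_singleton, notMem_empty, iff_false, not_and]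
    rintro h rfl; exact hT.1 _ h
  have hSR : S ⊆ ({w | ¬Reach (T \ A) w x} : Finset V) := fun w hw =>
    mem_filter.2 ⟨mem_univ _, fun hwx => hyx ((mem_filter.1 hw).2.trans hwx)⟩
  have hS : #(S \ {y}) + 1 = #S := by
    rw [sdiff_singleton_eq_erase]
    exact card_erase_add_one (mem_filter.2 ⟨mem_univ _, .refl _ _⟩)
  -- `FA` and `FB` can only share the arc `(y, x)`.
  have hF : #FA + #FB ≤ #A + 1 := by
    rw [← card_union_add_card_inter]
    refine add_le_add (card_le_card (union_subset (filter_subset _ _) (filter_subset _ _)))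
      (card_le_one.2 fun a ha b hb => ?_)
    simp only [FA, FB, mem_inter, mem_filter] at ha hb
    exact Prod.ext (ha.1.2.1.trans hb.1.2.1.symm) (ha.2.2.1.trans hb.2.2.1.symm)
  have := card_le_card hSR
  simp only [hloop, inter_empty, card_empty, zero_add] at hy hx
  omega

lemma outDeg_le_outDeg_add_card_of_isBalanced {T A : Finset (V × V)} (hT : IsTournament T)
    (hA : A ⊆ T) {x y : V} (hxy : Reach (T \ A) x y) (hyx : Reach (T \ A) y x)
    (hbal : IsBalanced (induce (T \ A) (strongComp (T \ A) y))) :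
    outDeg T y ≤ outDeg T x + #A := by
  have hyC := self_mem_strongComp (T \ A) y
  have hxC : x ∈ strongComp (T \ A) y := mem_strongComp.2 ⟨hyx, hxy⟩
  have hy := outDeg_le_card_outNbrs_inter_add T A y (strongComp (T \ A) y)
  have hx := card_outNbrs_inter_add_card_le hT A (x := x) (C := strongComp (T \ A) y)
    fun w hw => (mem_strongComp.1 hw).2.trans hyx
  have hby := two_mul_card_outNbrs_inter_add hT hA hbal hyC
  have hbx := two_mul_card_outNbrs_inter_add hT hA hbal hxC
  set C := strongComp (T \ A) y
  set FA := {a ∈ A | a.1 = y ∧ ¬Reach (T \ A) y a.2}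
  set FB := {a ∈ A | a.2 = x ∧ ¬Reach (T \ A) a.1 x}
  set E := {a ∈ A | (a.1 = y ∨ a.2 = x) ∧ Reach (T \ A) y a.2 ∧ Reach (T \ A) a.1 x}
  have hSR :
      ({w | Reach (T \ A) y w} : Finset V) \ C ⊆ ({w | ¬Reach (T \ A) w x} : Finset V) := by
    intro w hw
    simp only [C, mem_sdiff, mem_filter, mem_univ, true_and, mem_strongComp, not_and] at hw ⊢
    exact fun hwx => hw.2 hw.1 (hwx.trans hxy)
  have hPy : #(outNbrs A y ∩ C) ≤ #E := by
    refine card_le_card_of_injOn (Prod.mk y) (fun w hw => ?_)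
      fun _ _ _ _ h => (Prod.ext_iff.1 h).2
    simp only [C, coe_inter, Set.mem_inter_iff, mem_coe, mem_outNbrs, mem_strongComp] at hw
    exact mem_filter.2 ⟨hw.1, .inl rfl, hw.2.1, hyx⟩
  have hQx : #(inNbrs A x ∩ C) ≤ #E := by
    refine card_le_card_of_injOn (Prod.mk · x) (fun w hw => ?_)
      fun _ _ _ _ h => (Prod.ext_iff.1 h).1
    simp only [C, coe_inter, Set.mem_inter_iff, mem_coe, mem_inNbrs, mem_strongComp] at hw
    exact mem_filter.2 ⟨hw.1, .inr rfl, hyx, hw.2.2.trans hyx⟩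
  have hsum : #FA + #FB + #E ≤ #A := by
    have h1 : Disjoint FA FB := disjoint_filter.2 fun a _ ha hb => hb.2 (ha.1 ▸ hyx)
    have h2 : Disjoint (FA ∪ FB) E := by
      rw [← filter_or]
      exact disjoint_filter.2 fun a _ h he => h.elim (fun ha => ha.2 he.2.1) fun hb => hb.2 he.2.2
    rw [← card_union_of_disjoint h1, ← card_union_of_disjoint h2]
    exact card_le_card (union_subset (union_subset (filter_subset _ _) (filter_subset _ _))
      (filter_subset _ _))
  have := card_le_card hSR
  omega

end Reachability

lemma outDeg_le_outDeg_add_card_of_isDESC {T A : Finset (V × V)} (hT : IsTournament T)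
    (hA : IsDESC T A) {x y : V} (hxy : Reach (T \ A) x y) :
    outDeg T y ≤ outDeg T x + #A := by
  by_cases hyx : Reach (T \ A) y x
  · exact outDeg_le_outDeg_add_card_of_isBalanced hT hA.1 hxy hyx
      (hA.2 _ (isStrongComponent_strongComp _ y)).2
  · exact outDeg_le_outDeg_add_card_of_not_reach hT A hyx

end DescPaper

/-- The path is the vertex list `p`; its arcs are the pairs in `p.zip p.tail`. -/
theorem stmt8_general {V : Type*} [Fintype V] [DecidableEq V]
    (T A' : Finset (V × V)) (k : ℕ)
    (hT : IsTournament T) (hDESC : IsDESC T A') (hk : A'.card ≤ k)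
    (x y : V) (p : List V)
    (hchain : List.Chain' (fun u v => (u, v) ∈ T) p)
    (hhead : p.head? = some x) (hlast : p.getLast? = some y)
    (hdeg : (k : ℤ) < (outDeg T y : ℤ) - outDeg T x) :
    ∃ a ∈ p.zip p.tail, a ∈ A' := by
  by_contra! hA'
  have := outDeg_le_outDeg_add_card_of_isDESC hT hDESC
    (reach_sdiff_of_isChain hchain hA' hhead hlast)
  omega

/-- A directed path is given by its (nonempty, repetition-free)
list of vertices `p`, consecutive vertices being joined by arcs of `T`;
its arcs are the pairs in `p.zip p.tail`. -/
theorem stmt8 {V : Type*} [Fintype V] [DecidableEq V]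
    (T A' : Finset (V × V)) (k : ℕ)
    (hT : IsTournament T) (hDESC : IsDESC T A') (hk : A'.card ≤ k)
    (x y : V) (p : List V)
    (hchain : List.Chain' (fun u v => (u, v) ∈ T) p)
    (hnodup : p.Nodup)
    (hhead : p.head? = some x) (hlast : p.getLast? = some y)
    (hdeg : (k : ℤ) < (outDeg T y : ℤ) - outDeg T x) :
    ∃ a ∈ p.zip p.tail, a ∈ A' :=
  stmt8_general T A' k hT hDESC hk x y p hchain hhead hlast hdeg
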